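/- Correctness of the interval-mapping step: let T have pairwise distinct suffixes, let W be a string of length t occurring in T, let p be the rank in SA of any suffix of T beginning with W. Then the SA interval of W equals [PSV(p, t), NSV(p, t) - 1], where PSV(p,t) = max({q ≤ p : LCP[q] < t} ∪ {1}) and NSV(p,t) = min({q > p : LCP[q] < t} ∪ {n+1}). -/
import Mathlib

/-- Length of the longest common prefix of two lists. -/
def lcpLen {α : Type*} [DecidableEq α] : List α → List α → ℕ
  | a :: u, b :: v => if a = b then lcpLen u v + 1 else 0
  | _, _ => 0

lemma le_lcpLen_of_prefix {α : Type*} [DecidableEq α] :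
    ∀ (W u v : List α), W <+: u → W <+: v → W.length ≤ lcpLen u v := by
  intro W
  induction W with
  | nil => simp
  | cons a W ih =>
    rintro u v ⟨s, rfl⟩ ⟨r, rfl⟩
    show (a::W).length ≤ lcpLen (a :: (W ++ s)) (a :: (W ++ r))
    simp only [lcpLen, if_pos rfl, List.length_cons, if_true]
    exact Nat.add_le_add_right (ih _ _ ⟨s, rfl⟩ ⟨r, rfl⟩) 1

lemma prefix_of_le_lcpLen {α : Type*} [DecidableEq α] :
    ∀ (W u v : List α), W.length ≤ lcpLen u v → W <+: u → W <+: v := by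
  intro W
  induction W with
  | nil => simp
  | cons a W ih =>
    intro u v hlen hpre
    match u, v with
    | [], v => simp [lcpLen] at hlen
    | b :: u, [] => simp [lcpLen] at hlen
    | b :: u, c :: v =>
      simp only [lcpLen] at hlen
      split at hlen
      · next hbc =>
        subst hbc
        obtain ⟨r, hr⟩ := hpre
        simp only [List.cons_append, List.cons.injEq] at hr
        obtain ⟨rfl, hr⟩ := hr
        obtain ⟨m, hm⟩ := ih u v (by simp at hlen ⊢; omega) ⟨r, hr⟩
        exact ⟨m, by simp [← hm]⟩
      · simp at hlen

lemma lcpLen_comm {α : Type*} [DecidableEq α] :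
    ∀ (u v : List α), lcpLen u v = lcpLen v u := by
  intro u
  induction u with
  | nil => intro v; cases v <;> simp [lcpLen]
  | cons a u ih =>
    intro v
    cases v with
    | nil => simp [lcpLen]
    | cons b v =>
      simp only [lcpLen]
      by_cases h : a = b
      · subst h; simp [ih]
      · simp [h, Ne.symm h]

lemma lex_cases' {α : Type*} [LinearOrder α] {x y : List α} (h : x ≤ y) :
    List.Lex (· < ·) x y ∨ x = y := by
  rcases lt_or_eq_of_le h with h | h
  · left; exact h
  · right; exact h

lemma cons_le_cases' {α : Type*} [LinearOrder α] {a b : α} {x y : List α}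
    (h : a :: x ≤ b :: y) : a < b ∨ (a = b ∧ x ≤ y) := by
  rcases lex_cases' h with h | h
  · cases h with
    | cons h => exact Or.inr ⟨rfl, le_of_lt h⟩
    | rel h => exact Or.inl h
  · cases h; exact Or.inr ⟨rfl, le_rfl⟩

lemma not_cons_le_nil' {α : Type*} [LinearOrder α] {a : α} {x : List α}
    (h : a :: x ≤ ([] : List α)) : False := by
  rcases lex_cases' h with h | h
  · cases h
  · cases h

lemma prefix_of_between {α : Type*} [LinearOrder α] :
    ∀ (W x y z : List α), W <+: x → W <+: z → x ≤ y → y ≤ z → W <+: y := by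
  intro W
  induction W with
  | nil => simp
  | cons a W ih =>
    rintro x y z ⟨s, rfl⟩ ⟨r, rfl⟩ hxy hyz
    cases y with
    | nil => exact absurd hxy not_cons_le_nil'
    | cons b y =>
      rcases cons_le_cases' hxy with h1 | ⟨heq1, h1⟩ <;>
        rcases cons_le_cases' hyz with h2 | ⟨heq2, h2⟩
      · exact absurd (h1.trans h2) (lt_irrefl a)
      · exact absurd (heq2 ▸ h1) (lt_irrefl a)
      · exact absurd (heq1 ▸ h2) (lt_irrefl b)
      · subst heq1
        obtain ⟨m, hm⟩ := ih _ y _ ⟨s, rfl⟩ ⟨r, rfl⟩ h1 h2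
        exact ⟨m, by simp [← hm]⟩

/-- correctness of the interval-mapping step: if `p` is the rank
(in the suffix array) of any suffix of `T` beginning with the length-`t`
string `W`, then the suffix-array interval of `W` equals
`[PSV(p,t), NSV(p,t) - 1]`, where `PSV(p,t) = max({q ≤ p : LCP[q] < t} ∪ {0})`
(first LCP entry treated as `0`) and
`NSV(p,t) = min({q > p : LCP[q] < t} ∪ {n})` (0-indexed ranks). -/
theorem interval_of_W_eq_psv_nsv
    {α : Type*} [LinearOrder α] (T W : List α) (n t : ℕ) (hn : n = T.length)
    (hn0 : 0 < n) (SA LCP : ℕ → ℕ) (p : ℕ) (hp : p < n)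
    (hbij : Set.BijOn SA (Set.Iio n) (Set.Iio n))
    (hsort : ∀ a b : ℕ, a < b → b < n → T.drop (SA a) < T.drop (SA b))
    (hLCP : ∀ k, 0 < k → k < n →
      LCP k = lcpLen (T.drop (SA (k - 1))) (T.drop (SA k)))
    (hW : W.length = t) (hWp : W <+: T.drop (SA p))
    (psv nsv : ℕ)
    (hpsv : psv = (insert 0 ((Finset.range (p + 1)).filter
        (fun q => LCP q < t))).max' (by simp))
    (hnsv : nsv = (insert n ((Finset.Ioo p n).filter
        (fun q => LCP q < t))).min' (by simp)) :
    {i : ℕ | i < n ∧ W <+: T.drop (SA i)} = Set.Icc psv (nsv - 1) := by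
  have hle : ∀ a b, a ≤ b → b < n → T.drop (SA a) ≤ T.drop (SA b) := by
    intro a b hab hbn
    rcases eq_or_lt_of_le hab with rfl | h
    · exact le_rfl
    · exact le_of_lt (hsort a b h hbn)
  -- basic facts about psv
  have hpsv_mem := Finset.max'_mem (insert 0 ((Finset.range (p + 1)).filter
        (fun q => LCP q < t))) (by simp)
  rw [← hpsv] at hpsv_mem
  have hpsv_le_p : psv ≤ p := by
    rcases Finset.mem_insert.mp hpsv_mem with h | h
    · omega
    · have := (Finset.mem_filter.mp h).1
      simp only [Finset.mem_range] at this; omega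
  have hpsv_facts : psv ≠ 0 → LCP psv < t := fun h0 => by
    rcases Finset.mem_insert.mp hpsv_mem with h | h
    · exact absurd h h0
    · exact (Finset.mem_filter.mp h).2
  -- basic facts about nsv
  have hnsv_mem := Finset.min'_mem (insert n ((Finset.Ioo p n).filter
        (fun q => LCP q < t))) (by simp)
  rw [← hnsv] at hnsv_mem
  have hnsv_gt : p < nsv := by
    rcases Finset.mem_insert.mp hnsv_mem with h | h
    · omega
    · have := (Finset.mem_filter.mp h).1
      simp only [Finset.mem_Ioo] at this; omega
  have hnsv_le_n : nsv ≤ n := by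
    rw [hnsv]; exact Finset.min'_le _ _ (Finset.mem_insert_self _ _)
  have hnsv_facts : nsv ≠ n → LCP nsv < t := fun h0 => by
    rcases Finset.mem_insert.mp hnsv_mem with h | h
    · exact absurd h h0
    · exact (Finset.mem_filter.mp h).2
  -- key runs
  have key1 : ∀ q, psv < q → q ≤ p → t ≤ LCP q := by
    intro q h1 h2
    by_contra hq
    push_neg at hq
    have hmem : q ∈ insert 0 ((Finset.range (p + 1)).filter (fun q => LCP q < t)) :=
      Finset.mem_insert_of_mem (Finset.mem_filter.mpr ⟨Finset.mem_range.mpr (by omega), hq⟩)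
    have := Finset.le_max' _ q hmem
    rw [← hpsv] at this; omega
  have key2 : ∀ q, p < q → q < n → q < nsv → t ≤ LCP q := by
    intro q h1 h2 h3
    by_contra hq
    push_neg at hq
    have hmem : q ∈ insert n ((Finset.Ioo p n).filter (fun q => LCP q < t)) :=
      Finset.mem_insert_of_mem (Finset.mem_filter.mpr ⟨Finset.mem_Ioo.mpr ⟨h1, h2⟩, hq⟩)
    have := Finset.min'_le _ q hmem
    rw [← hnsv] at this; omega
  -- downward chain
  have down : ∀ m i, p - i ≤ m → psv ≤ i → i ≤ p → W <+: T.drop (SA i) := by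
    intro m
    induction m with
    | zero =>
      intro i h1 _ h3
      have : i = p := by omega
      simpa [this] using hWp
    | succ m ih =>
      intro i h1 h2 h3
      rcases eq_or_lt_of_le h3 with rfl | hlt
      · exact hWp
      · have hprev : W <+: T.drop (SA (i + 1)) := ih (i + 1) (by omega) (by omega) (by omega)
        have hLt : t ≤ LCP (i + 1) := key1 (i + 1) (by omega) (by omega)
        rw [hLCP (i + 1) (by omega) (by omega)] at hLt
        simp only [Nat.add_sub_cancel] at hLt
        rw [lcpLen_comm] at hLt
        exact prefix_of_le_lcpLen W _ _ (by omega) hprev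
  -- upward chain
  have up : ∀ m i, i - p ≤ m → p ≤ i → i < nsv → W <+: T.drop (SA i) := by
    intro m
    induction m with
    | zero =>
      intro i h1 h2 _
      have : i = p := by omega
      simpa [this] using hWp
    | succ m ih =>
      intro i h1 h2 h3
      rcases eq_or_lt_of_le h2 with rfl | hlt
      · exact hWp
      · have hin : i < n := by omega
        have hprev : W <+: T.drop (SA (i - 1)) := ih (i - 1) (by omega) (by omega) (by omega)
        have hLt : t ≤ LCP i := key2 i hlt hin h3
        rw [hLCP i (by omega) hin] at hLt
        exact prefix_of_le_lcpLen W _ _ (by omega) hprev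
  ext i
  simp only [Set.mem_setOf_eq, Set.mem_Icc]
  constructor
  · rintro ⟨hi, hWi⟩
    constructor
    · by_contra hc
      push_neg at hc
      have h0 : psv ≠ 0 := by omega
      have hlcp : LCP psv < t := hpsv_facts h0
      have hpn : psv < n := by omega
      have hW1 : W <+: T.drop (SA (psv - 1)) :=
        prefix_of_between W _ _ _ hWi hWp (hle i (psv - 1) (by omega) (by omega))
          (hle (psv - 1) p (by omega) hp)
      have hW2 : W <+: T.drop (SA psv) :=
        prefix_of_between W _ _ _ hWi hWp (hle i psv (by omega) hpn)
          (hle psv p (by omega) hp)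
      have := le_lcpLen_of_prefix W _ _ hW1 hW2
      rw [← hLCP psv (by omega) hpn] at this
      omega
    · by_contra hc
      push_neg at hc
      have hnsvi : nsv ≤ i := by omega
      have hnn : nsv ≠ n := by omega
      have hlcp : LCP nsv < t := hnsv_facts hnn
      have hnsvn : nsv < n := by omega
      have hW1 : W <+: T.drop (SA (nsv - 1)) :=
        prefix_of_between W _ _ _ hWp hWi (hle p (nsv - 1) (by omega) (by omega))
          (hle (nsv - 1) i (by omega) hi)
      have hW2 : W <+: T.drop (SA nsv) :=
        prefix_of_between W _ _ _ hWp hWi (hle p nsv (by omega) hnsvn)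
          (hle nsv i hnsvi hi)
      have := le_lcpLen_of_prefix W _ _ hW1 hW2
      rw [← hLCP nsv (by omega) hnsvn] at this
      omega
  · rintro ⟨h1, h2⟩
    have hin : i < n := by omega
    refine ⟨hin, ?_⟩
    rcases le_or_gt i p with h | h
    · exact down (p - i) i le_rfl h1 h
    · exact up (i - p) i le_rfl (le_of_lt h) (by omega)
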